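/- arXiv:1110.5395 — 5 statements merged into one kernel-verified Lean document; each statement's English description precedes it below -/
import Mathlib

section
/- Let k ≥ 3, let x₁, …, x_{k−1} be pairwise distinct nodes of V, let X = {x₁, …, x_{k−1}}, and assume V \ X is nonempty and C is nonempty. If for every y ∈ V \ X the probe (x₁, y, x₂, …, x_{k−1}) succeeds, then x₁ ∈ C and x_{k−1} ∈ C. -/
variable {V : Type*}

/-- Under the naive DoS attacker, a probe (an injective `k`-tuple of nodes)
probeSucceeds iff no node of the tuple is compromised, or both the first and last
nodes are compromised. -/
def probeSucceeds {k : ℕ} (hk : 0 < k) (C : Set V) (p : Fin k → V) : Prop :=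
  (∀ i, p i ∉ C) ∨ (p ⟨0, hk⟩ ∈ C ∧ p ⟨k - 1, by omega⟩ ∈ C)

/-- The probe `(x₁, y, x₂, …, x_{k-1})`: the node `y` is inserted in the second
position of the tuple `x₁, …, x_{k-1}`. -/
def probe1 {k : ℕ} (hk : 3 ≤ k) (x : Fin (k - 1) → V) (y : V) : Fin k → V :=
  fun i =>
    if (i : ℕ) = 0 then x ⟨0, by omega⟩
    else if (i : ℕ) = 1 then y
    else x ⟨(i : ℕ) - 1, by have := i.isLt; omega⟩

theorem probeSucceeds.entry_mem_and_exit_mem {k : ℕ} {hk : 0 < k} {C : Set V} {p : Fin k → V}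
    (hp : probeSucceeds hk C p) (hC : ∃ i, p i ∈ C) :
    p ⟨0, hk⟩ ∈ C ∧ p ⟨k - 1, by omega⟩ ∈ C :=
  hp.resolve_left fun hfree => hC.elim hfree

section probe1

variable {k : ℕ} (hk : 3 ≤ k) (x : Fin (k - 1) → V) (y : V)

theorem probe1_of_val_eq_zero {i : Fin k} (hi : (i : ℕ) = 0) {j : Fin (k - 1)}
    (hj : (j : ℕ) = 0) : probe1 hk x y i = x j := by
  simp only [probe1, if_pos hi]
  exact congrArg x (Fin.ext hj.symm)

theorem probe1_of_val_eq_succ {i : Fin k} {j : Fin (k - 1)} (hj : 0 < (j : ℕ))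
    (hij : (i : ℕ) = j + 1) : probe1 hk x y i = x j := by
  simp only [probe1, if_neg (show (i : ℕ) ≠ 0 by omega), if_neg (show (i : ℕ) ≠ 1 by omega)]
  exact congrArg x (Fin.ext (by simp only; omega))

theorem range_probe1 : Set.range (probe1 hk x y) = insert y (Set.range x) := by
  ext v
  simp only [Set.mem_range, Set.mem_insert_iff]
  constructor
  · rintro ⟨i, rfl⟩
    unfold probe1
    split_ifs
    exacts [Or.inr ⟨_, rfl⟩, Or.inl rfl, Or.inr ⟨_, rfl⟩]
  · rintro (rfl | ⟨j, rfl⟩)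
    · exact ⟨⟨1, by omega⟩, rfl⟩
    · rcases Nat.eq_zero_or_pos j with hj | hj
      · exact ⟨⟨0, by omega⟩, probe1_of_val_eq_zero hk x y rfl hj⟩
      · exact ⟨⟨j + 1, by omega⟩, probe1_of_val_eq_succ hk x y hj rfl⟩

end probe1

/-- If all probes `(x₁, y, x₂, …, x_{k-1})` with `y ∉ X` succeed (where
`V \ X` and `C` are nonempty), then `x₁` and `x_{k-1}` are compromised. -/
theorem stmt0 {k : ℕ} (hk : 3 ≤ k) (C : Set V)
    (x : Fin (k - 1) → V)
    (hVX : ∃ y, y ∉ Set.range x) (hC : C.Nonempty)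
    (h : ∀ y, y ∉ Set.range x → probeSucceeds (by omega) C (probe1 hk x y)) :
    x ⟨0, by omega⟩ ∈ C ∧ x ⟨k - 2, by omega⟩ ∈ C := by
  obtain ⟨c, hc⟩ := hC
  -- Some admissible probe passes through the compromised node `c`.
  obtain ⟨y, hy, hcy⟩ : ∃ y ∉ Set.range x, c ∈ insert y (Set.range x) := by
    by_cases hcx : c ∈ Set.range x
    · obtain ⟨y, hy⟩ := hVX
      exact ⟨y, hy, Or.inr hcx⟩
    · exact ⟨c, hcx, Or.inl rfl⟩
  obtain ⟨i, hi⟩ := (range_probe1 hk x y).symm ▸ hcy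
  have hends := (h y hy).entry_mem_and_exit_mem ⟨i, hi ▸ hc⟩
  rwa [probe1_of_val_eq_zero hk x y (i := ⟨0, by omega⟩) (j := ⟨0, by omega⟩) rfl rfl,
    probe1_of_val_eq_succ hk x y (i := ⟨k - 1, by omega⟩) (j := ⟨k - 2, by omega⟩)
      (by simp only; omega) (by simp only; omega)] at hends
end

section
/- Let k ≥ 3, let x₁, …, x_{k−1} be pairwise distinct nodes of V and X = {x₁, …, x_{k−1}}, and assume |C| ≥ 2. Suppose that: (i) every probe (x₁, y, x₂, …, x_{k−1}) with y ∈ V \ X fails; (ii) for every ordered pair (a, b) of distinct nodes of X there exists a probe with first node a and last node b that fails; and (iii) for every x ∈ X, every y ∈ V \ X, and every arrangement of X \ {x} in the middle positions, the probe whose first node is x, whose middle entries are the nodes of X \ {x}, and whose last node is y fails. Then no node of X is compromised and every node of V \ X is compromised; that is, C = V \ X. -/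
/-!
By (ii), at most one node of `X` is compromised, so `|C| ≥ 2` yields a compromised node `y ∉ X`.
For `x ∈ X`, the probe of (iii) from `x` through `X \ {x}` to `y` fails although its exit is
compromised, hence `x ∉ C`. Finally, the probe of (i) through `y ∉ X` fails, so one of its nodes
is compromised; all of them except `y` lie in `X`, hence `y ∈ C`.
-/

variable {V : Type*}

lemma probeSucceeds_of_mem_of_mem {k : ℕ} (hk : 0 < k) {C : Set V} {p : Fin k → V}
    (h₀ : p ⟨0, hk⟩ ∈ C) (h₁ : p ⟨k - 1, by omega⟩ ∈ C) : probeSucceeds hk C p :=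
  Or.inr ⟨h₀, h₁⟩

lemma exists_mem_of_not_probeSucceeds {k : ℕ} (hk : 0 < k) {C : Set V} {p : Fin k → V}
    (h : ¬ probeSucceeds hk C p) : ∃ j, p j ∈ C := by
  by_contra! hp
  exact h (Or.inl hp)

lemma probe1_mem_range_or_eq {k : ℕ} (hk : 3 ≤ k) (x : Fin (k - 1) → V) (y : V) (j : Fin k) :
    probe1 hk x y j ∈ Set.range x ∨ probe1 hk x y j = y := by
  unfold probe1
  split_ifs <;> simp

lemma Set.exists_mem_notMem_of_two_le_ncard {C S : Set V} (hC : 2 ≤ C.ncard)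
    (hCS : (C ∩ S).Subsingleton) : ∃ y ∈ C, y ∉ S := by
  by_contra! hsub
  have hC₁ : C.Subsingleton := by rwa [Set.inter_eq_left.mpr hsub] at hCS
  have := (Set.ncard_le_one hC₁.finite).mpr fun a ha b hb => hC₁ ha hb
  omega

lemma exists_probe_through_range {k : ℕ} (hk : 0 < k) {x : Fin (k - 1) → V}
    (hx : Function.Injective x) (i : Fin (k - 1)) {y : V} (hy : y ∉ Set.range x) :
    ∃ p : Fin k → V, Function.Injective p ∧ p ⟨0, hk⟩ = x i ∧ p ⟨k - 1, by omega⟩ = y ∧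
      {v : V | ∃ j : Fin k, 0 < (j : ℕ) ∧ (j : ℕ) < k - 1 ∧ p j = v} = Set.range x \ {x i} := by
  set σ := Equiv.swap ⟨0, i.pos⟩ i
  have hσ : Function.Injective (x ∘ σ) := hx.comp σ.injective
  refine ⟨fun j => if h : (j : ℕ) < k - 1 then x (σ ⟨j, h⟩) else y, ?_, ?_, ?_, ?_⟩
  · intro j₁ j₂ h
    dsimp only at h
    split_ifs at h with h₁ h₂ h₂
    · exact Fin.ext (Fin.mk.inj_iff.mp (hσ h))
    · exact absurd ⟨_, h⟩ hy
    · exact absurd ⟨_, h.symm⟩ hy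
    · exact Fin.ext (by omega)
  · exact (dif_pos i.pos).trans (congrArg x (Equiv.swap_apply_left _ _))
  · simp
  · ext v
    simp only [Set.mem_ofPred_eq, Set.mem_sdiff, Set.mem_range, Set.mem_singleton_iff]
    constructor
    · rintro ⟨j, hj₀, hj, rfl⟩
      rw [dif_pos hj]
      refine ⟨⟨_, rfl⟩, fun hi => ?_⟩
      have := congrArg Fin.val (σ.injective ((hx hi).trans (Equiv.swap_apply_left _ _).symm))
      simp only at this
      omega
    · rintro ⟨⟨t, rfl⟩, ht⟩
      have hσt : (σ t : ℕ) ≠ 0 := fun h => ht <| congrArg x <| by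
        rw [← Equiv.swap_apply_self ⟨0, i.pos⟩ i t, show σ t = ⟨0, i.pos⟩ from Fin.ext h,
          Equiv.swap_apply_left]
      refine ⟨⟨σ t, by omega⟩, Nat.pos_of_ne_zero hσt, (σ t).isLt, ?_⟩
      rw [dif_pos (σ t).isLt]
      exact congrArg x (Equiv.swap_apply_self _ _ _)

/-- Suppose `|C| ≥ 2` and: (i) every probe `(x₁, y, x₂, …, x_{k-1})` with
`y ∉ X` fails; (ii) for every ordered pair of distinct nodes of `X` some probe
with those endpoints fails; (iii) every probe starting at a node `x i` of `X`,
ending at a node `y ∉ X` and whose middle entries are exactly `X \ {x i}`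
fails.  Then the compromised nodes are exactly the nodes outside `X`. -/
theorem stmt5 {k : ℕ} (hk : 3 ≤ k) (C : Set V)
    (x : Fin (k - 1) → V) (hx : Function.Injective x)
    (hC : 2 ≤ C.ncard)
    (h1 : ∀ y, y ∉ Set.range x → ¬ probeSucceeds (by omega) C (probe1 hk x y))
    (h2 : ∀ a ∈ Set.range x, ∀ b ∈ Set.range x, a ≠ b →
      ∃ p : Fin k → V, Function.Injective p ∧ p ⟨0, by omega⟩ = a ∧
        p ⟨k - 1, by omega⟩ = b ∧ ¬ probeSucceeds (by omega) C p)
    (h3 : ∀ (i : Fin (k - 1)) (y : V), y ∉ Set.range x →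
      ∀ p : Fin k → V, Function.Injective p →
        p ⟨0, by omega⟩ = x i → p ⟨k - 1, by omega⟩ = y →
        {v : V | ∃ j : Fin k, 0 < (j : ℕ) ∧ (j : ℕ) < k - 1 ∧ p j = v}
          = Set.range x \ {x i} →
        ¬ probeSucceeds (by omega) C p) :
    C = (Set.range x)ᶜ := by
  have hCX : (C ∩ Set.range x).Subsingleton := by
    rintro a ⟨ha, hax⟩ b ⟨hb, hbx⟩
    by_contra hab
    obtain ⟨p, -, rfl, rfl, hp⟩ := h2 a hax b hbx hab
    exact hp (probeSucceeds_of_mem_of_mem _ ha hb)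
  obtain ⟨y, hyC, hyX⟩ := Set.exists_mem_notMem_of_two_le_ncard hC hCX
  have hxC : ∀ i, x i ∉ C := fun i hi => by
    obtain ⟨p, hp, hp₀, hp₁, hmid⟩ := exists_probe_through_range (by omega) hx i hyX
    exact h3 i y hyX p hp hp₀ hp₁ hmid
      (probeSucceeds_of_mem_of_mem _ (hp₀ ▸ hi) (hp₁ ▸ hyC))
  ext v
  constructor
  · rintro hv ⟨i, rfl⟩
    exact hxC i hv
  · intro hv
    obtain ⟨j, hj⟩ := exists_mem_of_not_probeSucceeds _ (h1 v hv)
    rcases probe1_mem_range_or_eq hk x v j with ⟨i, hi⟩ | hj'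
    · exact absurd (hi ▸ hj) (hxC i)
    · exact hj' ▸ hj
end

section
/- Let V be a finite set with |V| = n and let k be an integer with 3 ≤ k ≤ n. For C ⊆ V let succ_C denote the success predicate on probes (injective k-tuples of V): succ_C(p) holds iff no entry of p lies in C or both the first and last entries of p lie in C. If C₁, C₂ ⊆ V satisfy 2 ≤ |Cᵢ| ≤ n − 1 for i = 1, 2 and succ_{C₁}(p) = succ_{C₂}(p) for every injective k-tuple p of V, then C₁ = C₂. (In other words, the set of compromised nodes of a naive denial-of-service attacker controlling at least 2 but fewer than n nodes is uniquely determined by the success/failure outcomes of probes.) -/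
/-!
Suppose `x ∈ C₁ \ C₂`, and pick `b ∈ C₁` and `a ∈ C₂`, both different from `x`
(possible since both sets have at least two elements). Because `3 ≤ k ≤ |V|`, some probe
starts at `x`, ends at `b` and passes through `a`. It succeeds against `C₁`, as both of its
endpoints are compromised, but fails against `C₂`, whose node `a` it visits while its entry
`x` is honest. Hence `C₁ ⊆ C₂`, and `C₂ ⊆ C₁` by symmetry.
-/

variable {V : Type*}

theorem Set.InjOn.exists_injective_extend {α β : Type*} [Fintype α] [Fintype β]
    (hcard : Fintype.card α ≤ Fintype.card β) {s : Finset α} {f : α → β}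
    (hf : Set.InjOn f s) : ∃ g : α → β, Function.Injective g ∧ ∀ i ∈ s, g i = f i := by
  classical
  obtain ⟨t, hst, ht⟩ := Finset.exists_superset_card_eq
    (Finset.card_image_le.trans (Finset.card_le_univ s)) hcard
  obtain ⟨e, he⟩ := Finset.exists_equiv_extend_of_card_eq ht.symm hst hf
  exact ⟨Subtype.val ∘ e, Subtype.val_injective.comp e.injective, he⟩

theorem not_probeSucceeds_of_head_notMem {k : ℕ} (hk : 0 < k) {C : Set V}
    {p : Fin k → V} (h₀ : p ⟨0, hk⟩ ∉ C) {i : Fin k} (hi : p i ∈ C) :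
    ¬ probeSucceeds hk C p := by
  rintro (hclean | ⟨hhead, -⟩)
  exacts [hclean i hi, h₀ hhead]

theorem exists_probe_through [Fintype V] {k : ℕ} (hk : 3 ≤ k) (hkV : k ≤ Fintype.card V)
    {x a b : V} (hxa : x ≠ a) (hxb : x ≠ b) :
    ∃ p : Fin k → V, Function.Injective p ∧ p ⟨0, by omega⟩ = x ∧
      p ⟨k - 1, by omega⟩ = b ∧ a ∈ Set.range p := by
  have hlast₀ : k - 1 ≠ 0 := by omega
  have hlast₁ : k - 1 ≠ 1 := by omega
  have hcard : Fintype.card (Fin k) ≤ Fintype.card V := by simpa using hkV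
  let f : Fin k → V := fun i => if i.val = 0 then x else if i.val = k - 1 then b else a
  by_cases hab : a = b
  · subst hab
    have hf : Set.InjOn f ({⟨0, by omega⟩, ⟨k - 1, by omega⟩} : Finset (Fin k)) := by
      simp [f, Set.injOn_pair, Fin.ext_iff, hxa, eq_comm]
    obtain ⟨p, hp, hpf⟩ := hf.exists_injective_extend hcard
    refine ⟨p, hp, ?_, ?_, ⟨k - 1, by omega⟩, ?_⟩ <;> simp [hpf, f, hlast₀]
  · have hf : Set.InjOn f
        ({⟨0, by omega⟩, ⟨1, by omega⟩, ⟨k - 1, by omega⟩} : Finset (Fin k)) := by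
      intro i hi j hj
      simp only [Finset.coe_insert, Finset.coe_singleton, Set.mem_insert_iff,
        Set.mem_singleton_iff] at hi hj
      rcases hi with rfl | rfl | rfl <;> rcases hj with rfl | rfl | rfl <;>
        simp_all [f, eq_comm]
    obtain ⟨p, hp, hpf⟩ := hf.exists_injective_extend hcard
    refine ⟨p, hp, ?_, ?_, ⟨1, by omega⟩, ?_⟩ <;> simp [hpf, f, hlast₀, hlast₁.symm]

theorem subset_of_forall_probeSucceeds_iff [Fintype V] {k : ℕ} (hk : 3 ≤ k)
    (hkV : k ≤ Fintype.card V) {C₁ C₂ : Set V} (h₁ : 1 < C₁.ncard) (h₂ : 1 < C₂.ncard)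
    (h : ∀ p : Fin k → V, Function.Injective p →
      (probeSucceeds (by omega) C₁ p ↔ probeSucceeds (by omega) C₂ p)) :
    C₁ ⊆ C₂ := by
  intro x hx₁
  by_contra hx₂
  obtain ⟨b, hb, hbx⟩ := Set.exists_ne_of_one_lt_ncard h₁ x
  obtain ⟨a, ha, hax⟩ := Set.exists_ne_of_one_lt_ncard h₂ x
  obtain ⟨p, hp, hp₀, hpₗ, i, rfl⟩ := exists_probe_through hk hkV hax.symm hbx.symm
  have hsucc₁ : probeSucceeds (by omega) C₁ p := Or.inr ⟨hp₀ ▸ hx₁, hpₗ ▸ hb⟩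
  exact not_probeSucceeds_of_head_notMem _ (hp₀ ▸ hx₂) ha ((h p hp).mp hsucc₁)

/-- The compromised set of a naive DoS attacker controlling at least `2` but
fewer than `n` nodes is uniquely determined by the success/failure outcomes of
all probes (injective `k`-tuples), where `3 ≤ k ≤ n`. -/
theorem stmt6 [Fintype V] {n k : ℕ} (hn : Fintype.card V = n)
    (hk : 3 ≤ k) (hkn : k ≤ n) (C₁ C₂ : Set V)
    (h₁ : 2 ≤ C₁.ncard ∧ C₁.ncard ≤ n - 1)
    (h₂ : 2 ≤ C₂.ncard ∧ C₂.ncard ≤ n - 1)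
    (h : ∀ p : Fin k → V, Function.Injective p →
      (probeSucceeds (by omega) C₁ p ↔ probeSucceeds (by omega) C₂ p)) :
    C₁ = C₂ := by
  subst hn
  exact (subset_of_forall_probeSucceeds_iff hk hkn h₁.1 h₂.1 h).antisymm
    (subset_of_forall_probeSucceeds_iff hk hkn h₂.1 h₁.1 fun p hp => (h p hp).symm)
end

section
/- Let V be a finite set with |V| = n ≥ 3 and fix two distinct nodes x₁, x₂ ∈ V. Consider, for path length k = 3, the 3(n − 2) probes (x₁, y, x₂), (x₁, x₂, y), and (x₂, x₁, y) as y ranges over V \ {x₁, x₂}. If C₁, C₂ ⊆ V satisfy 2 ≤ |Cᵢ| ≤ n − 1 for i = 1, 2 and for each of these 3(n − 2) probes the success outcome under C₁ equals the success outcome under C₂, then C₁ = C₂. (Hence for paths of length 3 the compromised set can be detected using at most 3n probes.) -/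
variable {V : Type*}

/-- Success of the length-3 probe `(a, b, c)`. -/
def succ3 (C : Set V) (a b c : V) : Prop :=
  probeSucceeds (k := 3) (by omega) C ![a, b, c]

/-!
Each membership `v ∈ C` can be read off the probe outcomes. Both `x₁` and `x₂` are compromised
iff every probe `(x₁, y, x₂)` succeeds, since otherwise `|C| ≥ 2` yields a compromised `y` whose
probe fails. If not both are compromised, `x₁ ∈ C` iff some `(x₁, x₂, y)` succeeds while
`(x₂, x₁, y)` fails, and symmetrically for `x₂`. For any other node `y`, a compromised
endpoint `a` makes `(a, b, y)` succeed exactly when `y ∈ C`, and if neither endpoint is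
compromised, `(x₁, y, x₂)` succeeds exactly when `y ∉ C`.
-/

section Probes

variable {C : Set V} {a b c : V}

lemma succ3_iff : succ3 C a b c ↔ (a ∉ C ∧ b ∉ C ∧ c ∉ C) ∨ (a ∈ C ∧ c ∈ C) := by
  simp [succ3, probeSucceeds, Fin.forall_fin_succ]

lemma succ3_comm : succ3 C a b c ↔ succ3 C c b a := by
  simp only [succ3_iff]
  tauto

lemma mem_iff_succ3_of_mem (ha : a ∈ C) : c ∈ C ↔ succ3 C a b c := by
  simp [succ3_iff, ha]

lemma notMem_iff_succ3_of_notMem (ha : a ∉ C) (hc : c ∉ C) : b ∉ C ↔ succ3 C a b c := by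
  simp [succ3_iff, ha, hc]

lemma exists_mem_ne_ne_of_notMem (hC : 2 ≤ C.ncard) (ha : a ∉ C) :
    ∃ y ∈ C, y ≠ a ∧ y ≠ b := by
  obtain ⟨y, hy, hyb⟩ := Set.exists_ne_of_one_lt_ncard hC b
  exact ⟨y, hy, ne_of_mem_of_not_mem hy ha, hyb⟩

lemma mem_and_mem_iff_forall_succ3 (hC : 2 ≤ C.ncard) :
    a ∈ C ∧ b ∈ C ↔ ∀ y, y ≠ a → y ≠ b → succ3 C a y b := by
  refine ⟨fun ⟨ha, hb⟩ y _ _ => by simp [succ3_iff, ha, hb], fun hprobe => ?_⟩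
  by_contra hnot
  obtain ⟨y, hy, hya, hyb⟩ : ∃ y ∈ C, y ≠ a ∧ y ≠ b := by
    rcases not_and_or.mp hnot with ha | hb
    · exact exists_mem_ne_ne_of_notMem hC ha
    · obtain ⟨y, hy, hyb, hya⟩ := exists_mem_ne_ne_of_notMem (b := a) hC hb
      exact ⟨y, hy, hya, hyb⟩
  exact hnot (by simpa [succ3_iff, hy] using hprobe y hya hyb)

lemma mem_iff_exists_succ3 (hC : 2 ≤ C.ncard) (hnot : ¬(a ∈ C ∧ b ∈ C)) :
    a ∈ C ↔ ∃ y, y ≠ a ∧ y ≠ b ∧ succ3 C a b y ∧ ¬succ3 C b a y := by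
  constructor
  · intro ha
    have hb : b ∉ C := fun hb => hnot ⟨ha, hb⟩
    obtain ⟨y, hy, hyb, hya⟩ := exists_mem_ne_ne_of_notMem (b := a) hC hb
    exact ⟨y, hya, hyb, by simp [succ3_iff, ha, hy], by simp [succ3_iff, ha, hb]⟩
  · rintro ⟨y, -, -, hab, hba⟩
    by_contra ha
    simp_all [succ3_iff]

end Probes

def ProbesAgree (C₁ C₂ : Set V) (x₁ x₂ : V) : Prop :=
  ∀ y, y ≠ x₁ → y ≠ x₂ →
    (succ3 C₁ x₁ y x₂ ↔ succ3 C₂ x₁ y x₂) ∧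
    (succ3 C₁ x₁ x₂ y ↔ succ3 C₂ x₁ x₂ y) ∧
    (succ3 C₁ x₂ x₁ y ↔ succ3 C₂ x₂ x₁ y)

namespace ProbesAgree

variable {C₁ C₂ : Set V} {x₁ x₂ : V}

lemma swap (h : ProbesAgree C₁ C₂ x₁ x₂) : ProbesAgree C₁ C₂ x₂ x₁ := fun y hy₂ hy₁ =>
  let ⟨e₁, e₂, e₃⟩ := h y hy₁ hy₂
  ⟨succ3_comm.trans (e₁.trans succ3_comm), e₃, e₂⟩

lemma mem_and_mem_iff (h : ProbesAgree C₁ C₂ x₁ x₂) (hC₁ : 2 ≤ C₁.ncard)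
    (hC₂ : 2 ≤ C₂.ncard) : x₁ ∈ C₁ ∧ x₂ ∈ C₁ ↔ x₁ ∈ C₂ ∧ x₂ ∈ C₂ := by
  rw [mem_and_mem_iff_forall_succ3 hC₁, mem_and_mem_iff_forall_succ3 hC₂]
  exact forall₃_congr fun y hy₁ hy₂ => (h y hy₁ hy₂).1

lemma mem_left_iff (h : ProbesAgree C₁ C₂ x₁ x₂) (hC₁ : 2 ≤ C₁.ncard)
    (hC₂ : 2 ≤ C₂.ncard) : x₁ ∈ C₁ ↔ x₁ ∈ C₂ := by
  by_cases hb₁ : x₁ ∈ C₁ ∧ x₂ ∈ C₁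
  · exact iff_of_true hb₁.1 ((h.mem_and_mem_iff hC₁ hC₂).mp hb₁).1
  have hb₂ := mt (h.mem_and_mem_iff hC₁ hC₂).mpr hb₁
  rw [mem_iff_exists_succ3 hC₁ hb₁, mem_iff_exists_succ3 hC₂ hb₂]
  exact exists_congr fun y => and_congr_right fun hy₁ => and_congr_right fun hy₂ =>
    and_congr (h y hy₁ hy₂).2.1 (not_congr (h y hy₁ hy₂).2.2)

lemma mem_iff_of_ne (h : ProbesAgree C₁ C₂ x₁ x₂) (hC₁ : 2 ≤ C₁.ncard) (hC₂ : 2 ≤ C₂.ncard)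
    {z : V} (hz₁ : z ≠ x₁) (hz₂ : z ≠ x₂) : z ∈ C₁ ↔ z ∈ C₂ := by
  have hx₁ := h.mem_left_iff hC₁ hC₂
  have hx₂ := h.swap.mem_left_iff hC₁ hC₂
  obtain ⟨e₁, e₂, e₃⟩ := h z hz₁ hz₂
  by_cases m₁ : x₁ ∈ C₁
  · rw [mem_iff_succ3_of_mem (b := x₂) m₁, mem_iff_succ3_of_mem (hx₁.mp m₁), e₂]
  by_cases m₂ : x₂ ∈ C₁
  · rw [mem_iff_succ3_of_mem (b := x₁) m₂, mem_iff_succ3_of_mem (hx₂.mp m₂), e₃]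
  rw [← not_iff_not, notMem_iff_succ3_of_notMem m₁ m₂,
    notMem_iff_succ3_of_notMem (mt hx₁.mpr m₁) (mt hx₂.mpr m₂), e₁]

theorem eq (h : ProbesAgree C₁ C₂ x₁ x₂) (hC₁ : 2 ≤ C₁.ncard) (hC₂ : 2 ≤ C₂.ncard) :
    C₁ = C₂ := by
  ext z
  rcases eq_or_ne z x₁ with rfl | hz₁
  · exact h.mem_left_iff hC₁ hC₂
  rcases eq_or_ne z x₂ with rfl | hz₂
  · exact h.swap.mem_left_iff hC₁ hC₂
  exact h.mem_iff_of_ne hC₁ hC₂ hz₁ hz₂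

end ProbesAgree

theorem stmt7_general [Fintype V]
    (x₁ x₂ : V) (C₁ C₂ : Set V)
    (h₁ : 2 ≤ C₁.ncard ∧ C₁.ncard ≤ Fintype.card V - 1)
    (h₂ : 2 ≤ C₂.ncard ∧ C₂.ncard ≤ Fintype.card V - 1)
    (h : ∀ y, y ≠ x₁ → y ≠ x₂ →
      (succ3 C₁ x₁ y x₂ ↔ succ3 C₂ x₁ y x₂) ∧
      (succ3 C₁ x₁ x₂ y ↔ succ3 C₂ x₁ x₂ y) ∧
      (succ3 C₁ x₂ x₁ y ↔ succ3 C₂ x₂ x₁ y)) :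
    C₁ = C₂ :=
  ProbesAgree.eq h h₁.1 h₂.1

/-- For path length `3`, the compromised set of a naive DoS attacker with
`2 ≤ |C| ≤ n - 1` is determined by the outcomes of the `3(n-2)` probes
`(x₁, y, x₂)`, `(x₁, x₂, y)` and `(x₂, x₁, y)` for `y ∉ {x₁, x₂}`. -/
theorem stmt7 [Fintype V] (hn : 3 ≤ Fintype.card V)
    (x₁ x₂ : V) (hx : x₁ ≠ x₂) (C₁ C₂ : Set V)
    (h₁ : 2 ≤ C₁.ncard ∧ C₁.ncard ≤ Fintype.card V - 1)
    (h₂ : 2 ≤ C₂.ncard ∧ C₂.ncard ≤ Fintype.card V - 1)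
    (h : ∀ y, y ≠ x₁ → y ≠ x₂ →
      (succ3 C₁ x₁ y x₂ ↔ succ3 C₂ x₁ y x₂) ∧
      (succ3 C₁ x₁ x₂ y ↔ succ3 C₂ x₁ x₂ y) ∧
      (succ3 C₁ x₂ x₁ y ↔ succ3 C₂ x₂ x₁ y)) :
    C₁ = C₂ :=
  stmt7_general x₁ x₂ C₁ C₂ h₁ h₂ h
end

section
/- Let u, a ≥ 0 with u + a ≤ 1 and u < 1, let K be a positive integer, and consider K i.i.d. trials, each of which is 'unsuccessful' with probability u, 'controlled' with probability a, and 'safe' with probability 1 − u − a (formally, the product probability measure on (Fin K → Ω) where Ω is a three-element outcome type with these probabilities). Then the probability of the event that there exists i < K such that trials 0, …, i−1 are all unsuccessful and trial i is controlled equals a·(1 − u^K)/(1 − u), i.e. equals a·∑_{i=0}^{K−1} u^i. (This is the probability that the attacker eventually controls the client's path within K circuit-creation attempts, where each attempt is independently unsuccessful with probability u and a permitted controlled circuit with probability a.) -/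
/-!
The event splits according to the index `i` of the first trial that is not unsuccessful.
The pieces are disjoint cylinders: trials before `i` lie in `U`, trial `i` lies in `C`, later
trials are free. Under the product measure the `i`-th piece has probability `μ(U)^i μ(C)`,
so the total is the geometric sum `μ(C) ∑_{i<K} μ(U)^i`.
-/

open MeasureTheory

/-- The distribution of a single circuit-creation attempt: outcome `0` is
'unsuccessful' (probability `u`), outcome `1` is 'controlled' (probability `a`)
and outcome `2` is 'safe' (probability `1 - u - a`). -/
noncomputable def trialPMF (u a : ℝ) (hu : 0 ≤ u) (ha : 0 ≤ a) (hua : u + a ≤ 1) :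
    PMF (Fin 3) :=
  PMF.ofFintype
    ![ENNReal.ofReal u, ENNReal.ofReal a, 1 - (ENNReal.ofReal u + ENNReal.ofReal a)]
    (by
      have h : ENNReal.ofReal u + ENNReal.ofReal a ≤ 1 := by
        rw [← ENNReal.ofReal_add hu ha]
        exact ENNReal.ofReal_le_one.mpr hua
      rw [Fin.sum_univ_three]
      simp only [Matrix.cons_val_zero, Matrix.cons_val_one, Matrix.head_cons,
        Matrix.cons_val_two, Matrix.tail_cons]
      exact add_tsub_cancel_of_le h)

open Finset

section FirstHit

variable {α : Type*} {K : ℕ}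

theorem setOf_mem_and_forall_lt_mem_eq_pi (U C : Set α) (i : Fin K) :
    {ω : Fin K → α | ω i ∈ C ∧ ∀ j < i, ω j ∈ U} =
      Set.univ.pi fun j => if j < i then U else if j = i then C else Set.univ := by
  ext ω
  simp only [Set.mem_ofPred_eq, Set.mem_univ_pi]
  constructor
  · rintro ⟨hi, hlt⟩ j
    split_ifs with hj hji
    · exact hlt j hj
    · exact hji ▸ hi
    · trivial
  · intro h
    exact ⟨by simpa using h i, fun j hj => by simpa [hj] using h j⟩

theorem measurableSet_setOf_mem_and_forall_lt_mem [MeasurableSpace α] {U C : Set α}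
    (hU : MeasurableSet U) (hC : MeasurableSet C) (i : Fin K) :
    MeasurableSet {ω : Fin K → α | ω i ∈ C ∧ ∀ j < i, ω j ∈ U} := by
  rw [setOf_mem_and_forall_lt_mem_eq_pi]
  exact .univ_pi fun j => by split_ifs <;> first | exact hU | exact hC | exact .univ

theorem pairwise_disjoint_setOf_mem_and_forall_lt_mem {U C : Set α} (hUC : Disjoint U C) :
    Pairwise (Function.onFun Disjoint
      fun i : Fin K => {ω : Fin K → α | ω i ∈ C ∧ ∀ j < i, ω j ∈ U}) := by
  rw [pairwise_disjoint_on]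
  intro i i' hii'
  rw [Set.disjoint_left]
  rintro ω ⟨hi, -⟩ ⟨-, hlt⟩
  exact hUC.ne_of_mem (hlt i hii') hi rfl

theorem pi_setOf_mem_and_forall_lt_mem [MeasurableSpace α] (μ : Measure α)
    [IsProbabilityMeasure μ] (U C : Set α) (i : Fin K) :
    Measure.pi (fun _ : Fin K => μ) {ω | ω i ∈ C ∧ ∀ j < i, ω j ∈ U} =
      μ U ^ (i : ℕ) * μ C := by
  classical
  rw [setOf_mem_and_forall_lt_mem_eq_pi, Measure.pi_pi]
  simp only [apply_ite μ, measure_univ]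
  rw [prod_ite, prod_const, filter_gt_eq_Iio, Fin.card_Iio, prod_ite_eq']
  simp

theorem pi_exists_mem_and_forall_lt_mem [MeasurableSpace α] (μ : Measure α)
    [IsProbabilityMeasure μ] {U C : Set α} (hU : MeasurableSet U) (hC : MeasurableSet C)
    (hUC : Disjoint U C) :
    Measure.pi (fun _ : Fin K => μ) {ω | ∃ i, ω i ∈ C ∧ ∀ j < i, ω j ∈ U} =
      μ C * ∑ i ∈ range K, μ U ^ i := by
  rw [Set.ofPred_exists, measure_iUnion (pairwise_disjoint_setOf_mem_and_forall_lt_mem hUC)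
    (measurableSet_setOf_mem_and_forall_lt_mem hU hC), tsum_fintype]
  simp only [pi_setOf_mem_and_forall_lt_mem]
  rw [Fin.sum_univ_eq_sum_range (fun i => μ U ^ i * μ C), ← sum_mul, mul_comm]

end FirstHit

theorem trialPMF_toMeasure_zero (u a : ℝ) (hu : 0 ≤ u) (ha : 0 ≤ a) (hua : u + a ≤ 1) :
    (trialPMF u a hu ha hua).toMeasure {0} = ENNReal.ofReal u := by
  rw [PMF.toMeasure_apply_singleton _ _ (measurableSet_singleton _)]
  simp [trialPMF]

theorem trialPMF_toMeasure_one (u a : ℝ) (hu : 0 ≤ u) (ha : 0 ≤ a) (hua : u + a ≤ 1) :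
    (trialPMF u a hu ha hua).toMeasure {1} = ENNReal.ofReal a := by
  rw [PMF.toMeasure_apply_singleton _ _ (measurableSet_singleton _)]
  simp [trialPMF]

theorem ofReal_mul_geom_sum {u : ℝ} (a : ℝ) (hu : 0 ≤ u) (ha : 0 ≤ a) (K : ℕ) :
    ENNReal.ofReal (a * ∑ i ∈ range K, u ^ i) =
      ENNReal.ofReal a * ∑ i ∈ range K, ENNReal.ofReal u ^ i := by
  rw [ENNReal.ofReal_mul ha, ENNReal.ofReal_sum_of_nonneg fun i _ => pow_nonneg hu i]
  simp only [ENNReal.ofReal_pow hu]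

theorem stmt9_general (u a : ℝ) (hu : 0 ≤ u) (ha : 0 ≤ a) (hua : u + a ≤ 1) (hu1 : u < 1)
    (K : ℕ) :
    (Measure.pi fun _ : Fin K => (trialPMF u a hu ha hua).toMeasure)
        {ω : Fin K → Fin 3 | ∃ i : Fin K, ω i = 1 ∧ ∀ j : Fin K, j < i → ω j = 0}
      = ENNReal.ofReal (a * ((1 - u ^ K) / (1 - u))) ∧
    (Measure.pi fun _ : Fin K => (trialPMF u a hu ha hua).toMeasure)
        {ω : Fin K → Fin 3 | ∃ i : Fin K, ω i = 1 ∧ ∀ j : Fin K, j < i → ω j = 0}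
      = ENNReal.ofReal (a * ∑ i ∈ Finset.range K, u ^ i) := by
  have hprob : (Measure.pi fun _ : Fin K => (trialPMF u a hu ha hua).toMeasure)
      {ω : Fin K → Fin 3 | ∃ i : Fin K, ω i = 1 ∧ ∀ j : Fin K, j < i → ω j = 0}
        = ENNReal.ofReal (a * ∑ i ∈ Finset.range K, u ^ i) := by
    rw [ofReal_mul_geom_sum a hu ha, ← trialPMF_toMeasure_zero u a hu ha hua,
      ← trialPMF_toMeasure_one u a hu ha hua]
    exact pi_exists_mem_and_forall_lt_mem _ (measurableSet_singleton _)
      (measurableSet_singleton _) (Set.disjoint_singleton.mpr (by decide))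
  have hgeom : (1 - u ^ K) / (1 - u) = ∑ i ∈ range K, u ^ i := by
    rw [geom_sum_eq hu1.ne, ← neg_div_neg_eq, neg_sub, neg_sub]
  exact ⟨hgeom ▸ hprob, hprob⟩

/-- Under `K` i.i.d. trials, each 'unsuccessful' with probability `u`,
'controlled' with probability `a` and 'safe' otherwise, the probability that
some trial is controlled and all earlier trials are unsuccessful equals
`a (1 - u^K)/(1 - u) = a ∑_{i<K} uⁱ`. -/
theorem stmt9 (u a : ℝ) (hu : 0 ≤ u) (ha : 0 ≤ a) (hua : u + a ≤ 1) (hu1 : u < 1)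
    (K : ℕ) (hK : 0 < K) :
    (Measure.pi fun _ : Fin K => (trialPMF u a hu ha hua).toMeasure)
        {ω : Fin K → Fin 3 | ∃ i : Fin K, ω i = 1 ∧ ∀ j : Fin K, j < i → ω j = 0}
      = ENNReal.ofReal (a * ((1 - u ^ K) / (1 - u))) ∧
    (Measure.pi fun _ : Fin K => (trialPMF u a hu ha hua).toMeasure)
        {ω : Fin K → Fin 3 | ∃ i : Fin K, ω i = 1 ∧ ∀ j : Fin K, j < i → ω j = 0}
      = ENNReal.ofReal (a * ∑ i ∈ Finset.range K, u ^ i) :=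
  stmt9_general u a hu ha hua hu1 K
end
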